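/- arXiv:1212.2171 — 7 statements merged into one kernel-verified Lean document; each statement's English description precedes it below -/
import Mathlib

section
/- If f is an endomorphism of a module M whose kernel is an essential submodule of M, then f is nilpotent, provided M is Noetherian. -/
/-- An endomorphism of a Noetherian module whose kernel is essential is nilpotent. -/
theorem stmt_2 {R M : Type*} [CommRing R] [AddCommGroup M] [Module R M]
    [IsNoetherian R M] (f : Module.End R M)
    (hess : ∀ H : Submodule R M, H ≠ ⊥ → LinearMap.ker f ⊓ H ≠ ⊥) :
    IsNilpotent f := by
  obtain ⟨n, hn⟩ := Filter.eventually_atTop.mp f.eventually_disjoint_ker_pow_range_pow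
  refine ⟨n + 1, ?_⟩
  have hd := hn (n + 1) (Nat.le_succ n)
  have hker : LinearMap.ker f ≤ LinearMap.ker (f ^ (n + 1)) := by
    intro x hx
    simp only [LinearMap.mem_ker] at hx ⊢
    rw [pow_succ, Module.End.mul_apply, hx, map_zero]
  have hrange : LinearMap.range (f ^ (n + 1)) = ⊥ := by
    by_contra h
    exact hess _ h (le_bot_iff.mp fun x ⟨hx1, hx2⟩ => hd.le_bot ⟨hker hx1, hx2⟩)
  exact LinearMap.range_eq_bot.mp hrange
end

section
/- Let N and N' be finitely generated submodules of a module M over a Noetherian ring such that every localization M_p at an associated prime p of M has a unique submodule of length one (i.e., the socle/finitistic part of M_p has length at most one). Then Ass(N ∩ N') = Ass(N) ∩ Ass(N'). -/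
/-!
If `p = ann x` with `x ∈ N` and `p = ann y` with `y ∈ N'`, then `x/1` and `y/1` generate simple
submodules of `M_p`, since their annihilator is the maximal ideal `pR_p`. Binarity forces these two
submodules to coincide, so `t • y ∈ R ∙ x ≤ N` for some `t ∉ p`; as `p` is prime, the element
`t • y` of `N ⊓ N'` still has annihilator `p`.
-/

open Submodule IsLocalRing

section

variable {R M : Type*} [CommRing R] [AddCommGroup M] [Module R M]

theorem Submodule.colon_bot_singleton_coe {P : Submodule R M} (x : P) :
    (⊥ : Submodule R P).colon {x} = (⊥ : Submodule R M).colon {(x : M)} := by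
  ext r
  rw [mem_colon_singleton, mem_colon_singleton, mem_bot, mem_bot, ← coe_eq_zero, coe_smul]

theorem mem_associatedPrimes_submodule_iff [IsNoetherianRing R] {p : Ideal R}
    {P : Submodule R M} :
    p ∈ associatedPrimes R P ↔ p.IsPrime ∧ ∃ x ∈ P, p = (⊥ : Submodule R M).colon {x} := by
  simp [AssociatedPrimes.mem_iff, isAssociatedPrime_iff, colon_bot_singleton_coe]

theorem eq_colon_bot_singleton_smul_of_notMem {p : Ideal R} [hp : p.IsPrime] {x : M}
    (hx : p = (⊥ : Submodule R M).colon {x}) {t : R} (ht : t ∉ p) :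
    p = (⊥ : Submodule R M).colon {t • x} := by
  ext r
  have hmul : r * t ∈ p ↔ r ∈ p :=
    ⟨fun h ↦ (hp.mem_or_mem h).resolve_right ht, fun h ↦ p.mul_mem_right t h⟩
  rw [← hmul, hx]
  simp only [mem_colon_singleton, mem_bot, mul_smul]

section Localization

variable {S : Submonoid R} {M' : Type*} [AddCommGroup M'] [Module R M'] (R' : Type*) [CommRing R']
  [Algebra R R'] [IsLocalization S R'] [Module R' M'] [IsScalarTower R R' M']
  {f : M →ₗ[R] M'} [IsLocalizedModule S f]

theorem IsLocalizedModule.exists_smul_mem_span_singleton {x y : M}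
    (h : f y ∈ span R' {f x}) : ∃ s : S, (s : R) • y ∈ R ∙ x := by
  rw [← Set.image_singleton, ← localized'_span R' S f, mem_localized'] at h
  obtain ⟨m, hm, s, hms⟩ := h
  rw [← IsLocalizedModule.mk'_one S, IsLocalizedModule.mk'_eq_mk'_iff] at hms
  obtain ⟨u, hu⟩ := hms
  rw [one_smul] at hu
  have hus : ((u * s : S) : R) • y = (u : R) • m := by rw [Submonoid.coe_mul, mul_smul]; exact hu
  exact ⟨u * s, hus ▸ (R ∙ x).smul_mem _ hm⟩

end Localization

section AtPrime

variable {p : Ideal R} [p.IsPrime] {M' : Type*} [AddCommGroup M'] [Module R M']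
  [Module (Localization.AtPrime p) M'] [IsScalarTower R (Localization.AtPrime p) M']
  {f : M →ₗ[R] M'} [IsLocalizedModule p.primeCompl f]

theorem IsLocalizedModule.torsionOf_eq_maximalIdeal {m : M}
    (hm : p = (⊥ : Submodule R M).colon {m}) :
    Ideal.torsionOf (Localization.AtPrime p) M' (f m) = maximalIdeal (Localization.AtPrime p) := by
  apply le_antisymm
  · refine le_maximalIdeal fun htop ↦ ?_
    rw [Ideal.torsionOf_eq_top_iff, ← IsLocalizedModule.mk'_one p.primeCompl,
      IsLocalizedModule.mk'_eq_zero'] at htop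
    obtain ⟨s, hs⟩ := htop
    have hsp : (s : R) ∈ (⊥ : Submodule R M).colon {m} := mem_colon_singleton.2 hs
    exact s.2 (hm ▸ hsp)
  · rw [← Localization.AtPrime.map_eq_maximalIdeal, Ideal.map_le_iff_le_comap]
    intro a ha
    rw [hm, mem_colon_singleton, mem_bot] at ha
    rw [Ideal.mem_comap, Ideal.mem_torsionOf_iff, algebraMap_smul, ← map_smul, ha, map_zero]

theorem IsLocalizedModule.isSimpleModule_span_singleton {m : M}
    (hm : p = (⊥ : Submodule R M).colon {m}) :
    IsSimpleModule (Localization.AtPrime p) (span (Localization.AtPrime p) {f m}) := by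
  have hmax := (maximalIdeal.isMaximal (Localization.AtPrime p)).out
  rw [← torsionOf_eq_maximalIdeal (f := f) hm, ← isSimpleModule_iff_isCoatom] at hmax
  exact IsSimpleModule.congr (Ideal.quotTorsionOfEquivSpanSingleton _ _ _).symm

end AtPrime

end

theorem stmt_8_general {R M : Type*} [CommRing R] [IsNoetherianRing R]
    [AddCommGroup M] [Module R M]
    (hbin : ∀ (p : Ideal R) (hp : p.IsPrime), p ∈ associatedPrimes R M →
      ∃! H : Submodule (Localization.AtPrime p) (LocalizedModule p.primeCompl M),
        IsSimpleModule (Localization.AtPrime p) H)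
    (N N' : Submodule R M) :
    associatedPrimes R (N ⊓ N' : Submodule R M) =
      associatedPrimes R N ∩ associatedPrimes R N' := by
  refine Set.Subset.antisymm (fun p hp ↦
    ⟨associatedPrimes.subset_of_injective (inclusion_injective inf_le_left) hp,
      associatedPrimes.subset_of_injective (inclusion_injective inf_le_right) hp⟩) ?_
  rintro p ⟨hpN, hpN'⟩
  obtain ⟨hp, x, hxN, hx⟩ := mem_associatedPrimes_submodule_iff.1 hpN
  obtain ⟨-, y, hyN', hy⟩ := mem_associatedPrimes_submodule_iff.1 hpN'
  obtain ⟨H, -, hH⟩ :=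
    hbin p hp (associatedPrimes.subset_of_injective N.injective_subtype hpN)
  let f := LocalizedModule.mkLinearMap p.primeCompl M
  have hspan : span (Localization.AtPrime p) {f y} = span (Localization.AtPrime p) {f x} := by
    rw [hH _ (IsLocalizedModule.isSimpleModule_span_singleton hy),
      hH _ (IsLocalizedModule.isSimpleModule_span_singleton hx)]
  obtain ⟨t, ht⟩ := IsLocalizedModule.exists_smul_mem_span_singleton (S := p.primeCompl)
    (Localization.AtPrime p) (hspan ▸ mem_span_singleton_self (f y))
  have htN : (t : R) • y ∈ N := (span_singleton_le_iff_mem x N).2 hxN ht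
  exact mem_associatedPrimes_submodule_iff.2
    ⟨hp, _, ⟨htN, N'.smul_mem _ hyN'⟩, eq_colon_bot_singleton_smul_of_notMem hy t.2⟩

/-- In a binary module (each localization at an associated prime has a unique
simple submodule, i.e. a unique submodule of length one), the associated primes of
an intersection of two submodules are the common associated primes. -/
theorem stmt_8 {R M : Type*} [CommRing R] [IsNoetherianRing R]
    [AddCommGroup M] [Module R M] [Module.Finite R M]
    (hbin : ∀ (p : Ideal R) (hp : p.IsPrime), p ∈ associatedPrimes R M →
      ∃! H : Submodule (Localization.AtPrime p) (LocalizedModule p.primeCompl M),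
        IsSimpleModule (Localization.AtPrime p) H)
    (N N' : Submodule R M) :
    associatedPrimes R (N ⊓ N' : Submodule R M) =
      associatedPrimes R N ∩ associatedPrimes R N' :=
  stmt_8_general hbin N N'
end

section
/- A reduced commutative Noetherian ring R embeds (as an R-module) into any ideal I of R having the same set of associated primes as R. More precisely, if I is an ideal such that Ass(R/0) ⊆ Ass_R(I), then there is an injective R-module homomorphism R → I. -/
/-!
Every minimal prime of `R` is associated to `R`, hence to `I`, so it contains the annihilator
of `I`. In a reduced ring the minimal primes intersect in `0`, so `I` is a faithful module.
A faithful ideal of a Noetherian ring contains a non-zero-divisor `x` (prime avoidance over the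
finitely many associated primes), and `r ↦ r • x` embeds `R` into `I`.
-/

theorem minimalPrimes_subset_associatedPrimes_self (R : Type*) [CommRing R]
    [IsNoetherianRing R] : minimalPrimes R ⊆ associatedPrimes R R := by
  simpa [minimalPrimes, Module.annihilator_eq_bot.mpr inferInstance] using
    Module.associatedPrimes.minimalPrimes_annihilator_subset_associatedPrimes R R

theorem faithfulSMul_of_minimalPrimes_subset_associatedPrimes {R M : Type*} [CommRing R]
    [IsReduced R] [AddCommGroup M] [Module R M] (h : minimalPrimes R ⊆ associatedPrimes R M) :
    FaithfulSMul R M := by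
  refine Module.annihilator_eq_bot.mp (eq_bot_iff.mpr ?_)
  calc Module.annihilator R M
      ≤ sInf (minimalPrimes R) := le_sInf fun p hp ↦ by
        simpa [Submodule.annihilator_top] using (h hp).annihilator_le
    _ = ⊥ := by
        rw [minimalPrimes, Ideal.sInf_minimalPrimes, Ideal.radical_bot_of_isReduced]

theorem Ideal.exists_injective_linearMap_of_faithfulSMul {R : Type*} [CommRing R]
    [IsNoetherianRing R] (I : Ideal R) [FaithfulSMul R I] :
    ∃ φ : R →ₗ[R] I, Function.Injective φ := by
  obtain ⟨x, hxI, hx⟩ := I.nonempty_inter_nonZeroDivisors_of_faithfulSMul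
  exact ⟨LinearMap.toSpanSingleton R I ⟨x, hxI⟩,
    (injective_iff_map_eq_zero _).mpr fun r hr ↦ hx.2 r (congrArg Subtype.val hr)⟩

/-- A reduced Noetherian ring embeds, as a module, into any ideal having the same
associated primes: if every associated prime of `R` is associated to `I`, then
there is an injective `R`-linear map `R → I`. -/
theorem stmt_10 {R : Type*} [CommRing R] [IsNoetherianRing R] [IsReduced R]
    (I : Ideal R) (h : associatedPrimes R R ⊆ associatedPrimes R I) :
    ∃ φ : R →ₗ[R] I, Function.Injective φ :=
  have := faithfulSMul_of_minimalPrimes_subset_associatedPrimes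
    ((minimalPrimes_subset_associatedPrimes_self R).trans h)
  I.exists_injective_linearMap_of_faithfulSMul
end

section
/- Let M be a finitely generated module over a commutative Noetherian ring whose associated primes are all minimal over Ann(M) (no embedded primes), and suppose that for each associated prime p the localization M_p has length exactly 1 over R_p. Then Ann(M) is a radical ideal, i.e., equals the intersection of the associated primes of M. -/
/-!
The annihilator always lies in every associated prime. Conversely, suppose `r` lies in every
associated prime but `r • x ≠ 0`, and pick an associated prime `P ⊇ ann(r • x)`. Since `M_P` is
simple over the local ring `R_P`, we have `P M_P = 0`, so `r • x` vanishes in `M_P`: some `u ∉ P`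
kills `r • x`, contradicting `ann(r • x) ⊆ P`. An intersection of primes is radical.
-/

theorem annihilator_le_sInf_associatedPrimes {R M : Type*} [CommRing R] [AddCommGroup M]
    [Module R M] : Module.annihilator R M ≤ sInf (associatedPrimes R M) :=
  le_sInf fun _ hp => Submodule.annihilator_top (R := R) (M := M) ▸ hp.annihilator_le

theorem Ideal.isRadical_sInf_of_isPrime {R : Type*} [CommRing R] {S : Set (Ideal R)}
    (hS : ∀ p ∈ S, p.IsPrime) : (sInf S).IsRadical := by
  rw [sInf_eq_iInf']
  exact Ideal.isRadical_iInf _ fun p => (hS p p.2).isRadical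

theorem exists_smul_smul_eq_zero_of_maximalIdeal_le_annihilator {R M : Type*} [CommRing R]
    [AddCommGroup M] [Module R M] (P : Ideal R) [P.IsPrime]
    (hP : IsLocalRing.maximalIdeal (Localization.AtPrime P) ≤
      Module.annihilator (Localization.AtPrime P) (LocalizedModule P.primeCompl M))
    {r : R} (hr : r ∈ P) (x : M) : ∃ u : P.primeCompl, u • r • x = 0 := by
  have hr' : algebraMap R (Localization.AtPrime P) r ∈ IsLocalRing.maximalIdeal _ :=
    (IsLocalization.AtPrime.to_map_mem_maximal_iff _ P r).mpr hr
  rw [← IsLocalizedModule.eq_zero_iff P.primeCompl (LocalizedModule.mkLinearMap P.primeCompl M),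
    map_smul, ← algebraMap_smul (Localization.AtPrime P)]
  exact Module.mem_annihilator.mp (hP hr') _

theorem sInf_associatedPrimes_le_annihilator {R M : Type*} [CommRing R] [IsNoetherianRing R]
    [AddCommGroup M] [Module R M]
    (hsimple : ∀ p : Ideal R, [p.IsPrime] → p ∈ associatedPrimes R M →
      IsSimpleModule (Localization.AtPrime p) (LocalizedModule p.primeCompl M)) :
    sInf (associatedPrimes R M) ≤ Module.annihilator R M := by
  intro r hr
  refine Module.mem_annihilator.mpr fun x => by_contra fun hx => ?_
  obtain ⟨P, hP, hcolon⟩ := exists_le_isAssociatedPrime_of_isNoetherianRing R (r • x) hx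
  have := hP.isPrime
  have := hsimple P hP
  have hkill := (IsLocalRing.eq_maximalIdeal (IsSimpleModule.annihilator_isMaximal
    (R := Localization.AtPrime P) (M := LocalizedModule P.primeCompl M))).ge
  obtain ⟨u, hu⟩ := exists_smul_smul_eq_zero_of_maximalIdeal_le_annihilator P hkill
    (Ideal.mem_sInf.mp hr hP) x
  exact u.2 (hcolon (Submodule.mem_colon_singleton.mpr hu))

theorem stmt_11_general {R M : Type*} [CommRing R] [IsNoetherianRing R]
    [AddCommGroup M] [Module R M]
    (hbin : ∀ (p : Ideal R) (hp : p.IsPrime), p ∈ associatedPrimes R M →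
      IsSimpleModule (Localization.AtPrime p) (LocalizedModule p.primeCompl M)) :
    Module.annihilator R M = sInf (associatedPrimes R M) ∧
      (Module.annihilator R M).IsRadical := by
  have hann : Module.annihilator R M = sInf (associatedPrimes R M) :=
    annihilator_le_sInf_associatedPrimes.antisymm
      (sInf_associatedPrimes_le_annihilator fun p _ => hbin p ‹_›)
  exact ⟨hann, hann ▸ Ideal.isRadical_sInf_of_isPrime fun _ hp => hp.isPrime⟩

/-- A binary module without embedded primes is semi-prime: its annihilator is the
intersection of its associated primes, in particular a radical ideal. -/
theorem stmt_11 {R M : Type*} [CommRing R] [IsNoetherianRing R]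
    [AddCommGroup M] [Module R M] [Module.Finite R M]
    (hmin : ∀ p ∈ associatedPrimes R M, p ∈ (Module.annihilator R M).minimalPrimes)
    (hbin : ∀ (p : Ideal R) (hp : p.IsPrime), p ∈ associatedPrimes R M →
      IsSimpleModule (Localization.AtPrime p) (LocalizedModule p.primeCompl M)) :
    Module.annihilator R M = sInf (associatedPrimes R M) ∧
      (Module.annihilator R M).IsRadical :=
  stmt_11_general hbin
end

section
/- Let M be a finitely generated module over a commutative Noetherian ring, p an associated prime of M, and let N = ker(M → M_p) be the kernel of the localization map. Then the associated primes of M/N are exactly the associated primes of M that are contained in p, and the associated primes of N are the remaining associated primes of M. -/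
/-!
The kernel `N` of `M → M_p` consists of the elements killed by some `s ∉ p`. Such an `s` lies in
the annihilator of the element, so no associated prime of `N` is contained in `p`; conversely, if
`ann x` is (up to radical) a prime `q ⊄ p`, a power of any `s ∈ q \ p` kills `x`, so `x ∈ N`.
Elements outside `p` act injectively on `M/N`, so every associated prime `q = ann(x̄)` of `M/N`
lies in `p`. Since `q` is finitely generated, the submodule `q x ⊆ N` is finitely generated and
hence killed by a single `s ∉ p`, and then `q = ann(s x)` in `M`.
-/

open Submodule LocalizedModule

namespace Submodule

variable {R M : Type*} [CommRing R] [AddCommGroup M] [Module R M]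

lemma colon_bot_singleton_subtype (N : Submodule R M) (x : N) :
    (⊥ : Submodule R N).colon {x} = (⊥ : Submodule R M).colon {(x : M)} := by
  ext r
  simp [mem_colon_singleton, Subtype.ext_iff]

lemma colon_bot_singleton_mkQ (N : Submodule R M) (x : M) :
    (⊥ : Submodule R (M ⧸ N)).colon {N.mkQ x} = N.colon {x} := by
  ext r
  simp [mem_colon_singleton, ← Quotient.mk_smul]

end Submodule

lemma Ideal.disjoint_primeCompl_iff_le {R : Type*} [CommRing R] {p q : Ideal R} [p.IsPrime] :
    Disjoint (p.primeCompl : Set R) q ↔ q ≤ p :=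
  Set.disjoint_compl_left_iff_subset

namespace LocalizedModule

variable {R M : Type*} [CommRing R] [AddCommGroup M] [Module R M] {S : Submonoid R} {q : Ideal R}

lemma smul_mem_ker_mkLinearMap_iff {s : R} (hs : s ∈ S) {x : M} :
    s • x ∈ LinearMap.ker (mkLinearMap S M) ↔ x ∈ LinearMap.ker (mkLinearMap S M) := by
  simp only [mem_ker_mkLinearMap_iff]
  constructor
  · rintro ⟨t, ht, htsx⟩
    exact ⟨t * s, S.mul_mem ht hs, by rwa [mul_smul]⟩
  · rintro ⟨t, ht, htx⟩
    exact ⟨t, ht, by rw [smul_comm, htx, smul_zero]⟩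

lemma isAssociatedPrime_ker_mkLinearMap_iff :
    IsAssociatedPrime q (LinearMap.ker (mkLinearMap S M)) ↔
      IsAssociatedPrime q M ∧ ¬Disjoint (S : Set R) q := by
  constructor
  · intro h
    obtain ⟨x, hx⟩ := h.2
    obtain ⟨s, hsS, hsx⟩ := mem_ker_mkLinearMap_iff.mp x.2
    refine ⟨h.map_of_injective _ (injective_subtype _),
      Set.not_disjoint_iff.mpr ⟨s, hsS, ?_⟩⟩
    rw [hx]
    exact Ideal.le_radical (mem_colon_singleton.mpr (Subtype.ext hsx))
  · rintro ⟨⟨hq, x, hx⟩, hSq⟩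
    obtain ⟨s, hsS, hsq⟩ := Set.not_disjoint_iff.mp hSq
    rw [hx] at hsq
    obtain ⟨n, hn⟩ := hsq
    have hxN : x ∈ LinearMap.ker (mkLinearMap S M) :=
      mem_ker_mkLinearMap_iff.mpr ⟨s ^ n, pow_mem hsS n, mem_colon_singleton.mp hn⟩
    exact ⟨hq, ⟨x, hxN⟩, by rw [colon_bot_singleton_subtype, hx]⟩

lemma exists_notMem_smul_eq_zero_of_fg {p : Ideal R} [p.IsPrime] {K : Submodule R M} (hK : K.FG)
    (hKN : K ≤ LinearMap.ker (mkLinearMap p.primeCompl M)) :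
    ∃ s ∉ p, ∀ k ∈ K, s • k = 0 := by
  have : Module.Finite R K := Module.Finite.iff_fg.mpr hK
  have : Subsingleton (LocalizedModule p.primeCompl K) :=
    subsingleton_iff.mpr fun k ↦ by
      obtain ⟨s, hs, hsk⟩ := mem_ker_mkLinearMap_iff.mp (hKN k.2)
      exact ⟨s, hs, Subtype.ext hsk⟩
  have hp : (⟨p, inferInstance⟩ : PrimeSpectrum R) ∉ Module.support R K :=
    Module.notMem_support_iff.mpr this
  rw [Module.mem_support_iff_of_finite, SetLike.not_le_iff_exists] at hp
  obtain ⟨s, hsK, hsp⟩ := hp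
  exact ⟨s, hsp, fun k hk ↦ congrArg Subtype.val (Module.mem_annihilator.mp hsK ⟨k, hk⟩)⟩

lemma isAssociatedPrime_quotient_ker_mkLinearMap_iff [IsNoetherianRing R] {p : Ideal R}
    [p.IsPrime] :
    IsAssociatedPrime q (M ⧸ LinearMap.ker (mkLinearMap p.primeCompl M)) ↔
      IsAssociatedPrime q M ∧ q ≤ p := by
  set N := LinearMap.ker (mkLinearMap p.primeCompl M)
  simp only [isAssociatedPrime_iff]
  constructor
  · rintro ⟨hq, x', hx⟩
    obtain ⟨x, rfl⟩ := N.mkQ_surjective x'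
    rw [colon_bot_singleton_mkQ] at hx
    have hqp : q ≤ p := by
      intro r hrq
      by_contra hrp
      have hxN : x ∈ N := (smul_mem_ker_mkLinearMap_iff hrp).mp
        (mem_colon_singleton.mp (hx ▸ hrq))
      exact hq.ne_top ((Ideal.eq_top_iff_one _).mpr
        (by rw [hx, mem_colon_singleton, one_smul]; exact hxN))
    have hqN : Submodule.map (LinearMap.toSpanSingleton R M x) q ≤ N := by
      rw [map_le_iff_le_comap]
      intro r hr
      exact mem_colon_singleton.mp (hx ▸ hr)
    obtain ⟨s, hsp, hs⟩ :=
      exists_notMem_smul_eq_zero_of_fg ((IsNoetherian.noetherian q).map _) hqN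
    refine ⟨⟨hq, s • x, ?_⟩, hqp⟩
    ext r
    rw [hx, mem_colon_singleton, mem_colon_singleton, mem_bot, smul_comm]
    constructor
    · intro hr
      exact hs _ ⟨r, hx ▸ mem_colon_singleton.mpr hr, rfl⟩
    · intro hr
      exact mem_ker_mkLinearMap_iff.mpr ⟨s, hsp, hr⟩
  · rintro ⟨⟨hq, x, hx⟩, hqp⟩
    refine ⟨hq, N.mkQ x, ?_⟩
    rw [colon_bot_singleton_mkQ]
    ext r
    rw [mem_colon_singleton, mem_ker_mkLinearMap_iff]
    constructor
    · exact fun hr ↦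
        ⟨1, one_mem _, by rwa [one_smul, ← mem_bot R, ← mem_colon_singleton, ← hx]⟩
    · rintro ⟨t, ht, htr⟩
      have : t * r ∈ q := by rw [hx, mem_colon_singleton, mul_smul, htr]; exact zero_mem _
      exact (hq.mem_or_mem this).resolve_left fun htq ↦ ht (hqp htq)

end LocalizedModule

theorem stmt_12_general {R M : Type*} [CommRing R] [IsNoetherianRing R]
    [AddCommGroup M] [Module R M]
    (p : Ideal R) (hp : p.IsPrime)
    (N : Submodule R M)
    (hN : N = LinearMap.ker (LocalizedModule.mkLinearMap p.primeCompl M)) :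
    associatedPrimes R (M ⧸ N) = {q ∈ associatedPrimes R M | q ≤ p} ∧
    associatedPrimes R N = associatedPrimes R M \ {q | q ≤ p} := by
  subst hN
  refine ⟨Set.ext fun _ ↦ isAssociatedPrime_quotient_ker_mkLinearMap_iff,
    Set.ext fun _ ↦ ?_⟩
  rw [Set.mem_sdiff, Set.mem_ofPred_eq, ← Ideal.disjoint_primeCompl_iff_le]
  exact isAssociatedPrime_ker_mkLinearMap_iff

/-- Let `p` be an associated prime of `M` and `N` the kernel of the localization map
`M → M_p`. Then the associated primes of `M/N` are exactly the associated primes of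
`M` contained in `p`, and those of `N` are the remaining ones. -/
theorem stmt_12 {R M : Type*} [CommRing R] [IsNoetherianRing R]
    [AddCommGroup M] [Module R M] [Module.Finite R M]
    (p : Ideal R) (hp : p.IsPrime) (hass : p ∈ associatedPrimes R M)
    (N : Submodule R M)
    (hN : N = LinearMap.ker (LocalizedModule.mkLinearMap p.primeCompl M)) :
    associatedPrimes R (M ⧸ N) = {q ∈ associatedPrimes R M | q ≤ p} ∧
    associatedPrimes R N = associatedPrimes R M \ {q | q ≤ p} :=
  stmt_12_general p hp N hN
end

section
/- Let M be a finitely generated module over a Noetherian ring such that M_q has length 1 over R_q for every q ∈ Ass(M) (M is binary), and suppose M has a unique associated prime p with p moreover minimal. Then pM = 0 and M is isomorphic as an R/p-module to a nonzero ideal of the domain R/p. -/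
/-!
Since `p` is the only associated prime, every `r ∉ p` is a nonzerodivisor on `M`, so `M` embeds
in `Mₚ`. The simple `Rₚ`-module `Mₚ` is killed by the maximal ideal `pRₚ`, hence `pM = 0`, and
`Ann(M) ⊆ Ann(x) = p` for any `x` with `p = Ann(x)`. Simplicity also gives `(R ∙ x)ₚ = Mₚ`; as `M`
is finite, a single `s ∉ p` then satisfies `s • M ⊆ R ∙ x ≅ R ⧸ p`, and multiplication by the
nonzerodivisor `s` is the embedding.
-/

open Submodule Ideal

section

variable {R M : Type*} [CommRing R] [AddCommGroup M] [Module R M]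

theorem isSMulRegular_of_notMem_of_associatedPrimes_eq_singleton [IsNoetherianRing R]
    {p : Ideal R} (hass : associatedPrimes R M = {p}) {r : R} (hr : r ∉ p) :
    IsSMulRegular M r := by
  intro x y hxy
  rw [← sub_eq_zero]
  by_contra hxy0
  have hzd : r ∈ ⋃ q ∈ associatedPrimes R M, (q : Set R) :=
    (biUnion_associatedPrimes_eq_zero_divisors R M).symm ▸
      ⟨x - y, hxy0, by rw [smul_sub, sub_eq_zero]; exact hxy⟩
  simp only [hass, Set.mem_singleton_iff, Set.iUnion_iUnion_eq_left] at hzd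
  exact hr hzd

theorem le_annihilator_of_isSimpleModule_localizedModule {p : Ideal R} [p.IsPrime]
    [IsSimpleModule (Localization.AtPrime p) (LocalizedModule p.primeCompl M)]
    (hinj : Function.Injective (LocalizedModule.mkLinearMap p.primeCompl M)) :
    p ≤ Module.annihilator R M := by
  have hmax : Module.annihilator (Localization.AtPrime p) (LocalizedModule p.primeCompl M) =
      IsLocalRing.maximalIdeal _ :=
    IsLocalRing.eq_maximalIdeal IsSimpleModule.annihilator_isMaximal
  intro r hr
  have hr' : algebraMap R (Localization.AtPrime p) r ∈
      Module.annihilator (Localization.AtPrime p) (LocalizedModule p.primeCompl M) := by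
    rw [hmax]
    exact (IsLocalization.AtPrime.to_map_mem_maximal_iff _ p r).mpr hr
  refine Module.mem_annihilator.mpr fun m => hinj ?_
  rw [map_zero, map_smul, ← algebraMap_smul (Localization.AtPrime p)]
  exact Module.mem_annihilator.mp hr' _

theorem Submodule.exists_smul_mem_of_localized'_eq_top {S : Submonoid R} {Rₛ Mₛ : Type*}
    [CommRing Rₛ] [Algebra R Rₛ] [IsLocalization S Rₛ] [AddCommGroup Mₛ] [Module R Mₛ]
    [Module Rₛ Mₛ] [IsScalarTower R Rₛ Mₛ] (f : M →ₗ[R] Mₛ) [IsLocalizedModule S f]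
    {N : Submodule R M} (hN : N.localized' Rₛ S f = ⊤) (m : M) : ∃ r ∈ S, r • m ∈ N := by
  obtain ⟨n, hn, t, hnt⟩ := (mem_localized' Rₛ S f N (f m)).mp (hN ▸ mem_top)
  rw [IsLocalizedModule.mk'_eq_iff, ← f.map_smul_of_tower] at hnt
  obtain ⟨u, hu⟩ := (IsLocalizedModule.eq_iff_exists S (f := f)).mp hnt
  refine ⟨u * t, mul_mem u.2 t.2, ?_⟩
  rw [mul_smul, ← Submonoid.smul_def, ← Submonoid.smul_def, ← hu]
  exact N.smul_of_tower_mem u hn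

theorem Submodule.exists_notMem_forall_smul_mem [Module.Finite R M] {p : Ideal R} [p.IsPrime]
    {N : Submodule R M} (h : ∀ m : M, ∃ r ∉ p, r • m ∈ N) : ∃ s ∉ p, ∀ m : M, s • m ∈ N := by
  have hsupp : (⟨p, ‹_›⟩ : PrimeSpectrum R) ∉ Module.support R (M ⧸ N) := by
    rw [Module.notMem_support_iff']
    intro q
    obtain ⟨m, rfl⟩ := N.mkQ_surjective q
    obtain ⟨r, hr, hrm⟩ := h m
    exact ⟨r, hr, by rwa [← map_smul, mkQ_apply, Quotient.mk_eq_zero]⟩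
  rw [Module.mem_support_iff_of_finite, SetLike.not_le_iff_exists] at hsupp
  obtain ⟨s, hs, hsp⟩ := hsupp
  refine ⟨s, hsp, fun m => ?_⟩
  rw [← Quotient.mk_eq_zero, Quotient.mk_smul]
  exact Module.mem_annihilator.mp hs _

theorem exists_injective_linearMap_quotient_torsionOf {s : R} (hs : IsSMulRegular M s) (x : M)
    (hx : ∀ m : M, s • m ∈ R ∙ x) :
    ∃ φ : M →ₗ[R] R ⧸ torsionOf R M x, Function.Injective φ :=
  ⟨(quotTorsionOfEquivSpanSingleton R M x).symm.toLinearMap ∘ₗ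
      (LinearMap.lsmul R M s).codRestrict _ hx,
    (quotTorsionOfEquivSpanSingleton R M x).symm.injective.comp
      fun _ _ h => hs (congrArg Subtype.val h)⟩

end

theorem stmt_13_general {R M : Type*} [CommRing R] [IsNoetherianRing R]
    [AddCommGroup M] [Module R M] [Module.Finite R M]
    (p : Ideal R) (hp : p.IsPrime)
    (hass : associatedPrimes R M = {p})
    (hlen : IsSimpleModule (Localization.AtPrime p) (LocalizedModule p.primeCompl M)) :
    Module.annihilator R M = p ∧
      ∃ φ : M →ₗ[R] R ⧸ p, Function.Injective φ ∧ LinearMap.range φ ≠ ⊥ := by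
  have hreg : ∀ r ∉ p, IsSMulRegular M r := fun r hr =>
    isSMulRegular_of_notMem_of_associatedPrimes_eq_singleton hass hr
  have hinj : Function.Injective (LocalizedModule.mkLinearMap p.primeCompl M) :=
    (IsLocalizedModule.injective_iff_isRegular p.primeCompl _).mpr fun c => hreg c c.2
  have hpM : IsAssociatedPrime p M := by
    rw [← AssociatedPrimes.mem_iff, hass]; rfl
  obtain ⟨x, hx⟩ := (isAssociatedPrime_iff.mp hpM).2
  have htors : torsionOf R M x = p := by
    ext r
    rw [hx, mem_torsionOf_iff, mem_colon_singleton, Submodule.mem_bot]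
  have hx0 : x ≠ 0 := by
    rintro rfl
    exact hp.ne_top (htors ▸ torsionOf_zero R M)
  refine ⟨le_antisymm (annihilator_top (R := R) (M := M) ▸ hpM.annihilator_le)
    (le_annihilator_of_isSimpleModule_localizedModule hinj), ?_⟩
  have hloc : (R ∙ x).localized' (Localization.AtPrime p) p.primeCompl
      (LocalizedModule.mkLinearMap p.primeCompl M) = ⊤ := by
    refine (eq_bot_or_eq_top _).resolve_left fun hbot => hx0 (hinj ?_)
    rw [map_zero, ← mem_bot (Localization.AtPrime p), ← hbot]
    exact ⟨x, mem_span_singleton_self x, 1, IsLocalizedModule.mk'_one _ _ _⟩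
  obtain ⟨s, hs, hsx⟩ := exists_notMem_forall_smul_mem
    (exists_smul_mem_of_localized'_eq_top _ hloc)
  obtain ⟨φ, hφ⟩ := exists_injective_linearMap_quotient_torsionOf (hreg s hs) x hsx
  subst htors
  refine ⟨φ, hφ, fun hbot => hx0 (hφ ?_)⟩
  rw [LinearMap.range_eq_bot.mp hbot, map_zero, LinearMap.zero_apply]

/-- A univalent module: if `Ass(M) = {p}` with `p` minimal over `Ann(M)` and
`M_p` has length one, then `Ann(M) = p` (so `pM = 0`) and `M` embeds into `R/p`. -/
theorem stmt_13 {R M : Type*} [CommRing R] [IsNoetherianRing R]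
    [AddCommGroup M] [Module R M] [Module.Finite R M]
    (p : Ideal R) (hp : p.IsPrime)
    (hass : associatedPrimes R M = {p})
    (hmin : p ∈ (Module.annihilator R M).minimalPrimes)
    (hlen : IsSimpleModule (Localization.AtPrime p) (LocalizedModule p.primeCompl M)) :
    Module.annihilator R M = p ∧
      ∃ φ : M →ₗ[R] R ⧸ p, Function.Injective φ ∧ LinearMap.range φ ≠ ⊥ :=
  stmt_13_general p hp hass hlen
end

section
/- A finitely generated module M over a Noetherian ring with a single associated prime p and with M_p of length 1 over R_p is compressible: M admits an injective R-module homomorphism into every nonzero submodule of itself. -/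
/-!
Let `N ≠ 0` be a submodule. Then `∅ ≠ Ass N ⊆ Ass M = {p}`, so `p ∈ Ass N ⊆ Supp N` and `N_p ≠ 0`.
As `M_p` is simple, `N_p = M_p`, i.e. `(M/N)_p = 0`; since `M/N` is finite, some `t ∉ p`
annihilates `M/N`, so `t • M ⊆ N`. Finally `t` lies in no associated prime of `M`, hence is a
nonzerodivisor on `M`, and multiplication by `t` embeds `M` into `N`.
-/

open Submodule

section

variable {R M : Type*} [CommRing R] [AddCommGroup M] [Module R M]

theorem IsAssociatedPrime.mem_support {I : Ideal R} (h : IsAssociatedPrime I M) :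
    (⟨I, h.isPrime⟩ : PrimeSpectrum R) ∈ Module.support R M := by
  obtain ⟨x, hx⟩ := h.2
  refine Module.mem_support_iff_exists_annihilator.mpr ⟨x, ?_⟩
  rw [← bot_colon']
  exact Ideal.le_radical.trans hx.ge

theorem associatedPrimes_eq_singleton_of_ne_bot [IsNoetherianRing R] {p : Ideal R}
    (hass : associatedPrimes R M = {p}) {N : Submodule R M} (hN : N ≠ ⊥) :
    associatedPrimes R N = {p} := by
  have : Nontrivial N := nontrivial_iff_ne_bot.mpr hN
  refine (associatedPrimes.nonempty R N).subset_singleton_iff.mp ?_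
  exact hass ▸ associatedPrimes.subset_of_injective N.injective_subtype

theorem isSMulRegular_of_forall_notMem_associatedPrimes [IsNoetherianRing R] {t : R}
    (ht : ∀ q ∈ associatedPrimes R M, t ∉ q) : IsSMulRegular M t := by
  by_contra h
  have : t ∈ ⋃ q ∈ associatedPrimes R M, (q : Set R) := by
    rw [biUnion_associatedPrimes_eq_compl_regular R M]
    exact h
  obtain ⟨q, hq, htq⟩ := Set.mem_iUnion₂.mp this
  exact ht q hq htq

theorem Submodule.localized_ne_bot_of_mem_support {N : Submodule R M} {p : PrimeSpectrum R}
    (h : p ∈ Module.support R N) : N.localized p.asIdeal.primeCompl ≠ ⊥ := by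
  obtain ⟨n, hn⟩ := Module.mem_support_iff'.mp h
  intro hbot
  have hmem : LocalizedModule.mkLinearMap p.asIdeal.primeCompl M n ∈ N.localized _ :=
    ⟨n, n.2, 1, IsLocalizedModule.mk'_one _ _ _⟩
  rw [hbot, mem_bot] at hmem
  obtain ⟨r, hr, hrn⟩ := LocalizedModule.mem_ker_mkLinearMap_iff.mp hmem
  exact hn r hr (Subtype.ext hrn)

theorem Submodule.exists_notMem_forall_smul_mem_of_localized_eq_top [Module.Finite R M]
    (p : Ideal R) [p.IsPrime] {N : Submodule R M} (h : N.localized p.primeCompl = ⊤) :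
    ∃ t ∉ p, ∀ m : M, t • m ∈ N := by
  have : Subsingleton (LocalizedModule p.primeCompl (M ⧸ N)) := by
    refine (localizedQuotientEquiv p.primeCompl N).subsingleton_congr.mp ?_
    rw [h]
    infer_instance
  have hp : (⟨p, ‹_›⟩ : PrimeSpectrum R) ∉ Module.support R (M ⧸ N) :=
    Module.notMem_support_iff.mpr this
  rw [Module.mem_support_iff_of_finite, SetLike.not_le_iff_exists] at hp
  obtain ⟨t, htN, htp⟩ := hp
  refine ⟨t, htp, fun m => ?_⟩
  rw [← Quotient.mk_eq_zero, Quotient.mk_smul]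
  exact Module.mem_annihilator.mp htN _

end

/-- A univalent module is compressible: it embeds into each of its nonzero submodules. -/
theorem stmt_14 {R M : Type*} [CommRing R] [IsNoetherianRing R]
    [AddCommGroup M] [Module R M] [Module.Finite R M]
    (p : Ideal R) (hp : p.IsPrime)
    (hass : associatedPrimes R M = {p})
    (hlen : IsSimpleModule (Localization.AtPrime p) (LocalizedModule p.primeCompl M)) :
    ∀ N : Submodule R M, N ≠ ⊥ → ∃ φ : M →ₗ[R] N, Function.Injective φ := by
  intro N hN
  have hpN : IsAssociatedPrime p N :=
    (associatedPrimes_eq_singleton_of_ne_bot hass hN).ge (Set.mem_singleton p)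
  have htop : N.localized p.primeCompl = ⊤ :=
    (hlen.eq_bot_or_eq_top _).resolve_left (localized_ne_bot_of_mem_support hpN.mem_support)
  obtain ⟨t, htp, htN⟩ := exists_notMem_forall_smul_mem_of_localized_eq_top p htop
  have hreg : IsSMulRegular M t :=
    isSMulRegular_of_forall_notMem_associatedPrimes (hass ▸ fun q hq => hq ▸ htp)
  exact ⟨LinearMap.codRestrict N (LinearMap.lsmul R M t) htN,
    fun a b hab => hreg (congrArg Subtype.val hab)⟩
end
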